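/- arXiv:1911.12060 — 2 statements merged into one kernel-verified Lean document; each statement's English description precedes it below -/
import Mathlib

section
/- For every ε > 0, the function h(u) = erfc(√(u² + ε)) / erfc(u) is strictly increasing on the whole real line. (Note erfc(u) > 0 for every real u, so h is well defined.) -/
open Real

/-- The Gauss error function `erf x = (2/√π) ∫₀ˣ e^{−t²} dt`. -/
noncomputable def erf (x : ℝ) : ℝ := 2 / Real.sqrt Real.pi * ∫ t in (0:ℝ)..x, Real.exp (-t ^ 2)

/-- The complementary error function `erfc x = 1 - erf x`. -/
noncomputable def erfc (x : ℝ) : ℝ := 1 - erf x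

/-!
Write `s = √(u² + ε)` and `g x = x e^{x²} erfc x`. The derivative of the ratio is a positive
multiple of `g s - g u`, and `s > |u|`, so it suffices that `g` is strictly increasing. Its
derivative `(1 + 2x²) e^{x²} erfc x - (2/√π) x` is positive by the classical lower bound
`erfc x > (2/√π) x e^{-x²} / (1 + 2x²)`, which holds because `erfc` minus the bound has the negative
derivative `-(2/√π) e^{-x²} · 2 / (1 + 2x²)²` and tends to `0` at `+∞`.
-/

open Filter Topology MeasureTheory Set

theorem StrictAnti.lt_of_tendsto_atTop {α β : Type*} [TopologicalSpace α] [Preorder α]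
    [OrderClosedTopology α] [LinearOrder β] [NoMaxOrder β] {f : β → α} {a : α}
    (hf : StrictAnti f) (ha : Tendsto f atTop (𝓝 a)) (b : β) : a < f b := by
  obtain ⟨c, hc⟩ := exists_gt b
  exact (hf.antitone.le_of_tendsto ha c).trans_lt (hf hc)

theorem pos_of_hasDerivAt_neg_of_tendsto_zero {f f' : ℝ → ℝ} (hf : ∀ x, HasDerivAt f (f' x) x)
    (hf' : ∀ x, f' x < 0) (hlim : Tendsto f atTop (𝓝 0)) (x : ℝ) : 0 < f x :=
  (strictAnti_of_deriv_neg fun y => (hf y).deriv ▸ hf' y).lt_of_tendsto_atTop hlim x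

theorem exp_mul_exp_neg (x : ℝ) : exp x * exp (-x) = 1 := by
  rw [← exp_add, add_neg_cancel, exp_zero]

theorem continuous_exp_neg_sq : Continuous fun t : ℝ => exp (-t ^ 2) := by fun_prop

theorem integrable_exp_neg_sq : Integrable fun t : ℝ => exp (-t ^ 2) := by
  simpa using integrable_exp_neg_mul_sq one_pos

theorem tendsto_exp_neg_sq_atTop : Tendsto (fun x : ℝ => exp (-x ^ 2)) atTop (𝓝 0) :=
  tendsto_exp_atBot.comp (tendsto_neg_atTop_atBot.comp (tendsto_pow_atTop two_ne_zero))

theorem hasDerivAt_erf (x : ℝ) : HasDerivAt erf (2 / √π * exp (-x ^ 2)) x :=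
  (intervalIntegral.integral_hasDerivAt_right integrable_exp_neg_sq.intervalIntegrable
    (continuous_exp_neg_sq.stronglyMeasurableAtFilter _ _)
    continuous_exp_neg_sq.continuousAt).const_mul _

theorem hasDerivAt_erfc (x : ℝ) : HasDerivAt erfc (-(2 / √π * exp (-x ^ 2))) x :=
  (hasDerivAt_erf x).const_sub 1

theorem tendsto_erf_atTop : Tendsto erf atTop (𝓝 1) := by
  have h := (intervalIntegral_tendsto_integral_Ioi 0 integrable_exp_neg_sq.integrableOn
    tendsto_id).const_mul (2 / √π)
  have hπ : √π ≠ 0 := by positivity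
  have hg : ∫ t in Ioi (0 : ℝ), exp (-t ^ 2) = √π / 2 := by simpa using integral_gaussian_Ioi 1
  rwa [hg, div_mul_div_cancel₀ hπ, div_self two_ne_zero] at h

theorem tendsto_erfc_atTop : Tendsto erfc atTop (𝓝 0) :=
  (sub_self (1 : ℝ)) ▸ tendsto_erf_atTop.const_sub 1

theorem erfc_pos (x : ℝ) : 0 < erfc x :=
  pos_of_hasDerivAt_neg_of_tendsto_zero hasDerivAt_erfc
    (fun y => neg_neg_of_pos (by positivity)) tendsto_erfc_atTop x

theorem hasDerivAt_mul_exp_neg_sq_div (x : ℝ) :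
    HasDerivAt (fun x => x * exp (-x ^ 2) / (1 + 2 * x ^ 2))
      (exp (-x ^ 2) * (2 / (1 + 2 * x ^ 2) ^ 2 - 1)) x := by
  have hden : 1 + 2 * x ^ 2 ≠ 0 := by positivity
  have h := ((hasDerivAt_id' x).fun_mul (hasDerivAt_pow 2 x).fun_neg.exp).fun_div
    (((hasDerivAt_pow 2 x).const_mul 2).const_add 1) hden
  exact h.congr_deriv (by field_simp; ring)

theorem tendsto_mul_exp_neg_sq_div_atTop :
    Tendsto (fun x => x * exp (-x ^ 2) / (1 + 2 * x ^ 2)) atTop (𝓝 0) := by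
  refine squeeze_zero_norm (fun x => ?_) tendsto_exp_neg_sq_atTop
  have hden : 0 < 1 + 2 * x ^ 2 := by positivity
  rw [norm_div, norm_mul, norm_of_nonneg (exp_pos _).le, norm_of_nonneg hden.le,
    div_le_iff₀ hden, Real.norm_eq_abs]
  nlinarith [exp_pos (-x ^ 2), abs_nonneg x, sq_abs x, sq_nonneg (|x| - 1)]

theorem mul_exp_neg_sq_div_lt_erfc (x : ℝ) :
    2 / √π * (x * exp (-x ^ 2) / (1 + 2 * x ^ 2)) < erfc x := by
  have hderiv (y : ℝ) : HasDerivAt (fun y => erfc y - 2 / √π * (y * exp (-y ^ 2) / (1 + 2 * y ^ 2)))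
      (-(2 / √π * exp (-y ^ 2) * (2 / (1 + 2 * y ^ 2) ^ 2))) y :=
    ((hasDerivAt_erfc y).sub ((hasDerivAt_mul_exp_neg_sq_div y).const_mul (2 / √π))).congr_deriv
      (by ring)
  have hlim := tendsto_erfc_atTop.sub (tendsto_mul_exp_neg_sq_div_atTop.const_mul (2 / √π))
  rw [mul_zero, sub_zero] at hlim
  exact sub_pos.1 <| pos_of_hasDerivAt_neg_of_tendsto_zero hderiv
    (fun y => neg_neg_of_pos (by positivity)) hlim x

noncomputable def erfcx (x : ℝ) : ℝ := exp (x ^ 2) * erfc x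

theorem hasDerivAt_mul_erfcx (x : ℝ) :
    HasDerivAt (fun x => x * erfcx x) ((1 + 2 * x ^ 2) * erfcx x - 2 / √π * x) x := by
  have h := (hasDerivAt_id' x).fun_mul ((hasDerivAt_pow 2 x).exp.fun_mul (hasDerivAt_erfc x))
  exact h.congr_deriv (by
    simp only [erfcx]; linear_combination -(2 / √π * x) * exp_mul_exp_neg (x ^ 2))

theorem strictMono_mul_erfcx : StrictMono fun x => x * erfcx x := by
  refine strictMono_of_deriv_pos fun x => ?_
  rw [(hasDerivAt_mul_erfcx x).deriv, sub_pos]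
  have hden : 0 < 1 + 2 * x ^ 2 := by positivity
  calc 2 / √π * x
      = 2 / √π * x * (exp (x ^ 2) * exp (-x ^ 2)) * ((1 + 2 * x ^ 2) / (1 + 2 * x ^ 2)) := by
        rw [exp_mul_exp_neg, div_self hden.ne', mul_one, mul_one]
    _ = (1 + 2 * x ^ 2) * exp (x ^ 2) * (2 / √π * (x * exp (-x ^ 2) / (1 + 2 * x ^ 2))) := by
        ring
    _ < (1 + 2 * x ^ 2) * exp (x ^ 2) * erfc x := by
        gcongr
        exact mul_exp_neg_sq_div_lt_erfc x
    _ = (1 + 2 * x ^ 2) * erfcx x := by rw [erfcx, mul_assoc]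

theorem hasDerivAt_erfc_sqrt_sq_add_div_erfc {ε u : ℝ} (h : 0 < u ^ 2 + ε) :
    HasDerivAt (fun u => erfc √(u ^ 2 + ε) / erfc u)
      (2 / √π * exp (-(u ^ 2 + √(u ^ 2 + ε) ^ 2)) / (√(u ^ 2 + ε) * erfc u ^ 2) *
        (√(u ^ 2 + ε) * erfcx √(u ^ 2 + ε) - u * erfcx u)) u := by
  set s := √(u ^ 2 + ε) with hs_def
  have hs : 0 < s := sqrt_pos.2 h
  have hsqrt : HasDerivAt (fun u => √(u ^ 2 + ε)) (u / s) u :=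
    (((hasDerivAt_pow 2 u).add_const ε).sqrt h.ne').congr_deriv (by field_simp; ring)
  have herfc := (erfc_pos u).ne'
  refine (((hasDerivAt_erfc s).comp u hsqrt).fun_div (hasDerivAt_erfc u) herfc).congr_deriv ?_
  simp only [erfcx, neg_add, exp_add, Function.comp_apply, ← hs_def]
  field_simp
  linear_combination (u * erfc u * exp (-s ^ 2)) * exp_mul_exp_neg (u ^ 2)
    - (s * erfc s * exp (-u ^ 2)) * exp_mul_exp_neg (s ^ 2)

/-- For every `ε > 0`, the function `h u = erfc (√(u² + ε)) / erfc u` is strictly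
increasing on the whole real line. -/
theorem strictMono_erfc_ratio (ε : ℝ) (hε : 0 < ε) :
    StrictMono (fun u : ℝ => erfc (Real.sqrt (u ^ 2 + ε)) / erfc u) := by
  refine strictMono_of_deriv_pos fun u => ?_
  have h : 0 < u ^ 2 + ε := by positivity
  rw [(hasDerivAt_erfc_sqrt_sq_add_div_erfc h).deriv]
  have hu : u < √(u ^ 2 + ε) := calc
    u ≤ √(u ^ 2) := by rw [sqrt_sq_eq_abs]; exact le_abs_self u
    _ < √(u ^ 2 + ε) := sqrt_lt_sqrt (sq_nonneg u) (lt_add_of_pos_right _ hε)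
  have herfc := erfc_pos u
  have hs := sqrt_pos.2 h
  exact mul_pos (by positivity) (sub_pos.2 (strictMono_mul_erfcx hu))
end

section
/- Fix 0 < δ < 1 and let t satisfy erfc(t) = δ. Let d : ℝ → ℝ be a function such that for every ε > 0, erfc(d(ε)) + erfc(√(d(ε)² + ε)) = 2δ. Then d(ε) tends to t as ε → 0 from the right. (Consequently the optimal Gaussian noise amount σ_pDP-OPT = (d(ε) + √(d(ε)² + ε))·Δ/(ε√2) for (ε,δ)-probabilistic differential privacy is Θ(1/ε) as ε → 0 with δ fixed.) -/
open Real

private lemma expsq_intable (a b : ℝ) :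
    IntervalIntegrable (fun t : ℝ => Real.exp (-t ^ 2)) MeasureTheory.volume a b :=
  Continuous.intervalIntegrable (by continuity) a b

private lemma erf_sub (a b : ℝ) :
    erf b - erf a = 2 / Real.sqrt Real.pi * ∫ t in a..b, Real.exp (-t ^ 2) := by
  unfold erf
  rw [← mul_sub]
  congr 1
  rw [← intervalIntegral.integral_add_adjacent_intervals (expsq_intable 0 a) (expsq_intable a b)]
  ring

private lemma two_div_sqrt_pi_pos : 0 < 2 / Real.sqrt Real.pi :=
  div_pos two_pos (Real.sqrt_pos.mpr Real.pi_pos)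

private lemma erf_strictMono : StrictMono erf := by
  intro a b hab
  have h : 0 < ∫ t in a..b, Real.exp (-t ^ 2) := by
    apply intervalIntegral.integral_pos hab (Continuous.continuousOn (by continuity))
    · intro x _; positivity
    · exact ⟨a, Set.left_mem_Icc.mpr hab.le, by positivity⟩
  have := mul_pos two_div_sqrt_pi_pos h
  rw [← erf_sub] at this
  linarith

private lemma erfc_anti : ∀ {a b : ℝ}, a ≤ b → erfc b ≤ erfc a := by
  intro a b hab
  have : erf a ≤ erf b := erf_strictMono.monotone hab
  simp only [erfc]; linarith

private lemma erfc_lt : ∀ {a b : ℝ}, a < b → erfc b < erfc a := by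
  intro a b hab
  have := erf_strictMono hab
  simp only [erfc]; linarith

/-- Lipschitz-type bound. -/
private lemma erfc_sub_le (a b : ℝ) (hab : a ≤ b) :
    erfc a - erfc b ≤ 2 / Real.sqrt Real.pi * (b - a) := by
  have h1 : erfc a - erfc b = erf b - erf a := by simp [erfc]
  rw [h1, erf_sub a b]
  have h2 : (∫ t in a..b, Real.exp (-t ^ 2)) ≤ ∫ _t in a..b, (1 : ℝ) := by
    apply intervalIntegral.integral_mono_on hab (expsq_intable a b)
      (intervalIntegrable_const)
    intro x _
    calc Real.exp (-x ^ 2) ≤ Real.exp 0 := Real.exp_le_exp.mpr (by nlinarith [sq_nonneg x])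
    _ = 1 := Real.exp_zero
  have h3 : (∫ _t in a..b, (1 : ℝ)) = b - a := by simp
  rw [h3] at h2
  exact mul_le_mul_of_nonneg_left h2 two_div_sqrt_pi_pos.le

private lemma erf_neg (x : ℝ) : erf (-x) = - erf x := by
  unfold erf
  rw [← mul_neg]
  congr 1
  have : (∫ t in (0:ℝ)..(-x), Real.exp (-t ^ 2)) = ∫ t in (0:ℝ)..(-x), Real.exp (-(-t) ^ 2) := by
    congr 1; ext t; ring_nf
  rw [this, intervalIntegral.integral_comp_neg (fun t => Real.exp (-t ^ 2))]
  rw [show -(0:ℝ) = 0 by ring, neg_neg]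
  rw [← intervalIntegral.integral_symm]

private lemma erfc_neg (x : ℝ) : erfc (-x) = 2 - erfc x := by
  simp [erfc, erf_neg]; ring

/-- Fix `0 < δ < 1` and let `t` satisfy `erfc t = δ`. If `d : ℝ → ℝ` satisfies, for all
`ε > 0`, `erfc (d ε) + erfc (√((d ε)² + ε)) = 2δ`, then `d ε → t` as `ε → 0⁺`. -/
theorem pDP_OPT_solution_tendsto (δ t : ℝ) (hδ0 : 0 < δ) (hδ1 : δ < 1)
    (ht : erfc t = δ) (d : ℝ → ℝ)
    (hd : ∀ ε : ℝ, 0 < ε →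
      erfc (d ε) + erfc (Real.sqrt ((d ε) ^ 2 + ε)) = 2 * δ) :
    Filter.Tendsto d (nhdsWithin 0 (Set.Ioi 0)) (nhds t) := by
  set L : ℝ := 2 / Real.sqrt Real.pi with hL
  have hLpos : 0 < L := two_div_sqrt_pi_pos
  -- upper bound: d ε ≤ t for all ε > 0
  have hub : ∀ ε : ℝ, 0 < ε → d ε ≤ t := by
    intro ε hε
    by_contra hcon
    push_neg at hcon
    have h1 : d ε ≤ Real.sqrt ((d ε) ^ 2 + ε) := by
      calc d ε ≤ |d ε| := le_abs_self _
      _ = Real.sqrt ((d ε) ^ 2) := (Real.sqrt_sq_eq_abs _).symm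
      _ ≤ _ := Real.sqrt_le_sqrt (by linarith)
    have h2 : erfc (Real.sqrt ((d ε) ^ 2 + ε)) ≤ erfc (d ε) := erfc_anti h1
    have h3 : erfc (d ε) < erfc t := erfc_lt hcon
    have := hd ε hε
    rw [ht] at h3
    linarith
  rw [Metric.tendsto_nhdsWithin_nhds]
  intro η hη
  set κ : ℝ := erfc (t - η) - δ with hκ
  have hκpos : 0 < κ := by
    have := erfc_lt (show t - η < t by linarith)
    rw [ht] at this; simp [hκ]; linarith
  set m : ℝ := min (2 * κ) (2 - 2 * δ) with hm
  have hmpos : 0 < m := lt_min (by linarith) (by linarith)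
  refine ⟨(m / L) ^ 2, by positivity, ?_⟩
  intro ε hε hεθ
  simp only [Set.mem_Ioi] at hε
  rw [Real.dist_eq, abs_sub_lt_iff] at hεθ ⊢
  obtain ⟨hεθ1, _⟩ := hεθ
  have hεlt : ε < (m / L) ^ 2 := by linarith
  have hsε : Real.sqrt ε < m / L := by
    have := Real.sqrt_lt_sqrt hε.le hεlt
    rwa [Real.sqrt_sq (by positivity)] at this
  -- key estimate: erfc(√(dε²+ε)) ≥ erfc(|dε|) - L √ε
  have habs : Real.sqrt ((d ε) ^ 2) = |d ε| := Real.sqrt_sq_eq_abs _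
  have hs1 : |d ε| ≤ Real.sqrt ((d ε) ^ 2 + ε) := by
    rw [← habs]; exact Real.sqrt_le_sqrt (by linarith)
  have hs2 : Real.sqrt ((d ε) ^ 2 + ε) ≤ |d ε| + Real.sqrt ε := by
    rw [show (d ε) ^ 2 + ε = (d ε)^2 + (Real.sqrt ε)^2 by
      rw [Real.sq_sqrt hε.le]]
    have h := Real.sqrt_le_sqrt (show (d ε)^2 + (Real.sqrt ε)^2 ≤ (|d ε| + Real.sqrt ε)^2 by
      nlinarith [abs_nonneg (d ε), Real.sqrt_nonneg ε, sq_abs (d ε)])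
    calc Real.sqrt ((d ε)^2 + (Real.sqrt ε)^2) ≤ Real.sqrt ((|d ε| + Real.sqrt ε)^2) := h
    _ = |d ε| + Real.sqrt ε := Real.sqrt_sq (by positivity)
  have hkey : erfc (|d ε|) - erfc (Real.sqrt ((d ε) ^ 2 + ε)) ≤ L * Real.sqrt ε := by
    calc erfc (|d ε|) - erfc (Real.sqrt ((d ε) ^ 2 + ε))
        ≤ L * (Real.sqrt ((d ε) ^ 2 + ε) - |d ε|) := erfc_sub_le _ _ hs1
      _ ≤ L * Real.sqrt ε := by
          apply mul_le_mul_of_nonneg_left _ hLpos.le; linarith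
  have hLsε : L * Real.sqrt ε < m := by
    calc L * Real.sqrt ε < L * (m / L) := by
          exact mul_lt_mul_of_pos_left hsε hLpos
    _ = m := by field_simp
  have hdub := hub ε hε
  have heq := hd ε hε
  -- show t - η < d ε
  have hlb : t - η < d ε := by
    by_contra hcon
    push_neg at hcon
    rcases lt_or_ge (d ε) 0 with hneg | hpos
    · -- d ε < 0: erfc(dε) + erfc(|dε|) = 2
      have h4 : |d ε| = -(d ε) := abs_of_neg hneg
      have h5 : erfc (|d ε|) = 2 - erfc (d ε) := by rw [h4]; exact erfc_neg _
      have : 2 * δ ≥ 2 - L * Real.sqrt ε := by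
        rw [← heq]; linarith
      have hm2 : m ≤ 2 - 2 * δ := min_le_right _ _
      linarith
    · -- 0 ≤ d ε ≤ t - η: 2 erfc(dε) ≥ 2δ + 2κ
      have h4 : |d ε| = d ε := abs_of_nonneg hpos
      have h5 : erfc (t - η) ≤ erfc (d ε) := erfc_anti hcon
      have : 2 * δ ≥ 2 * erfc (d ε) - L * Real.sqrt ε := by
        rw [← heq]; rw [h4] at hkey; linarith
      have hm1 : m ≤ 2 * κ := min_le_left _ _
      simp only [hκ] at hm1
      linarith
  constructor <;> linarith
end
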